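/- arXiv:2206.08279 — 2 statements merged into one kernel-verified Lean document; each statement's English description precedes it below -/
import Mathlib

section
/- Let μ be a finite positive Borel measure on the unit circle T with infinite support, K_n its Christoffel kernel, and for w ∈ T let B_{n+1}(w,z) := (1 − conj(w) z) K_n(w,z) be the para-orthogonal polynomial. If ζ and ξ are two distinct points of T that are both zeros of B_{n+1}(w,·), then K_n(ζ, ξ) = 0. -/
open MeasureTheory Polynomial Filter
open scoped ComplexConjugate Topology

/-- The Christoffel kernel `K_n(w,z) = ∑_{j=0}^n conj(φ_j(w)) φ_j(z)`. -/
noncomputable def christoffelK (φ : ℕ → Polynomial ℂ) (n : ℕ) (w z : ℂ) : ℂ :=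
  ∑ j ∈ Finset.range (n + 1), conj ((φ j).eval w) * (φ j).eval z

/-- The para-orthogonal polynomial `B_{n+1}(w,z) = (1 − conj(w) z) K_n(w,z)`. -/
noncomputable def paraOrtho (φ : ℕ → Polynomial ℂ) (n : ℕ) (w z : ℂ) : ℂ :=
  (1 - conj w * z) * christoffelK φ n w z

/-!
For `x` on the circle, `F_x(z) = (z - x) K_n(x, z)` has degree `≤ n + 1` and, by the reproducing
property of `K_n` and `z * conj z = 1` on the support of `μ`, is orthogonal to `z, …, z ^ n`.
A polynomial of degree `≤ n + 1` orthogonal to `z, …, z ^ n` is determined by its inner products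
with `1` and `z ^ (n + 1)`, so these polynomials form a space of dimension at most `2`.
Both `F_ζ` and `F_ξ` vanish at `w`, while `F_x(w) ≠ 0` as soon as `x ≠ w` avoids the finitely many
zeros of `K_n(w, ·)`, which is possible because `μ` has infinite support on the circle. Hence `F_ζ`
is a multiple of `F_ξ`, and evaluating at `ξ` gives `(ξ - ζ) K_n(ζ, ξ) = 0`.
-/

theorem Continuous.integrable_of_ae_mem_isCompact {α E : Type*} [TopologicalSpace α]
    [T2Space α] [MeasurableSpace α] [OpensMeasurableSpace α] {μ : Measure α}
    [IsFiniteMeasureOnCompacts μ] [NormedAddCommGroup E] {K : Set α} (hK : IsCompact K)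
    (hμ : ∀ᵐ z ∂μ, z ∈ K) {f : α → E} (hf : Continuous f) : Integrable f μ := by
  rw [← Measure.restrict_eq_self_of_ae_mem hμ]
  exact hf.continuousOn.integrableOn_compact hK

theorem exists_eq_smul_of_not_linearIndependent {K M : Type*} [Field K] [AddCommGroup M]
    [Module K M] (ℓ : M →ₗ[K] K) {f : Fin 3 → M} (h : ¬ LinearIndependent K f)
    (h₀ : ℓ (f 0) = 0) (h₁ : ℓ (f 1) = 0) (h₂ : ℓ (f 2) ≠ 0) (hf₁ : f 1 ≠ 0) :
    ∃ c : K, f 0 = c • f 1 := by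
  obtain ⟨g, hg, i, hi⟩ := Fintype.not_linearIndependent_iff.mp h
  rw [Fin.sum_univ_three] at hg
  have hg₂ : g 2 = 0 := by simpa [h₀, h₁, h₂] using congrArg ℓ hg
  rw [hg₂, zero_smul, add_zero] at hg
  have hg₀ : g 0 ≠ 0 := by
    intro hg₀
    have hg₁ : g 1 ≠ 0 := by fin_cases i <;> simp_all
    simp [hg₀, hg₁, hf₁] at hg
  refine ⟨-(g 1 / g 0), ?_⟩
  calc f 0 = (g 0)⁻¹ • (g 0 • f 0) := (inv_smul_smul₀ hg₀ _).symm
    _ = (g 0)⁻¹ • -(g 1 • f 1) := by rw [eq_neg_of_add_eq_zero_left hg]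
    _ = -(g 1 / g 0) • f 1 := by rw [smul_neg, smul_smul, neg_smul, div_eq_inv_mul]

theorem exists_mem_notMem_finset_of_ae_mem {α : Type*} [MeasurableSpace α] {μ : Measure α}
    {S : Set α} (hμ : ∀ᵐ z ∂μ, z ∈ S) (hμinf : ∀ s : Finset α, μ ((s : Set α)ᶜ) ≠ 0)
    (s : Finset α) : ∃ x ∈ S, x ∉ s := by
  by_contra! h
  exact hμinf s (measure_mono_null (fun z hz hzT => hz (h z hzT)) (ae_iff.mp hμ))

noncomputable def polyInner (μ : Measure ℂ) (p q : ℂ[X]) : ℂ :=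
  ∫ z, p.eval z * conj (q.eval z) ∂μ

section PolyInner

variable {μ : Measure ℂ}

theorem conj_polyInner (p q : ℂ[X]) : conj (polyInner μ p q) = polyInner μ q p := by
  rw [polyInner, ← integral_conj]
  simp only [map_mul, Complex.conj_conj, mul_comm]
  rfl

theorem polyInner_X_mul_X_mul (hμ : ∀ᵐ z ∂μ, z ∈ Metric.sphere (0 : ℂ) 1) (p q : ℂ[X]) :
    polyInner μ (X * p) (X * q) = polyInner μ p q := by
  refine integral_congr_ae (hμ.mono fun z hz => ?_)
  have hzz : z * conj z = 1 := by
    rw [Complex.mul_conj', mem_sphere_zero_iff_norm.mp hz]; norm_num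
  simp only [eval_mul, eval_X, map_mul]
  linear_combination (p.eval z * conj (q.eval z)) * hzz

variable [IsFiniteMeasureOnCompacts μ]

noncomputable def polyInnerₗ (hμ : ∀ᵐ z ∂μ, z ∈ Metric.sphere (0 : ℂ) 1) (q : ℂ[X]) :
    ℂ[X] →ₗ[ℂ] ℂ where
  toFun p := polyInner μ p q
  map_add' p p' := by
    simp only [polyInner, eval_add, add_mul]
    exact integral_add
      ((by fun_prop : Continuous _).integrable_of_ae_mem_isCompact (isCompact_sphere 0 1) hμ)
      ((by fun_prop : Continuous _).integrable_of_ae_mem_isCompact (isCompact_sphere 0 1) hμ)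
  map_smul' c p := by
    simp only [polyInner, eval_smul, smul_eq_mul, mul_assoc, integral_const_mul, RingHom.id_apply]

@[simp]
theorem polyInnerₗ_apply (hμ : ∀ᵐ z ∂μ, z ∈ Metric.sphere (0 : ℂ) 1) (p q : ℂ[X]) :
    polyInnerₗ hμ q p = polyInner μ p q :=
  rfl

theorem eq_zero_of_polyInner_self_eq_zero (hμ : ∀ᵐ z ∂μ, z ∈ Metric.sphere (0 : ℂ) 1)
    (hμinf : ∀ s : Finset ℂ, μ ((s : Set ℂ)ᶜ) ≠ 0) {p : ℂ[X]} (h : polyInner μ p p = 0) :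
    p = 0 := by
  by_contra hp
  have hself : polyInner μ p p = ((∫ z, ‖p.eval z‖ ^ 2 ∂μ : ℝ) : ℂ) := by
    simp only [polyInner, Complex.mul_conj', ← Complex.ofReal_pow, integral_complex_ofReal]
  have hint : Integrable (fun z => ‖p.eval z‖ ^ 2) μ :=
    (by fun_prop : Continuous _).integrable_of_ae_mem_isCompact (isCompact_sphere 0 1) hμ
  have hae : (fun z => ‖p.eval z‖ ^ 2) =ᵐ[μ] 0 :=
    (integral_eq_zero_iff_of_nonneg (fun z => by positivity) hint).mp
      (by exact_mod_cast hself ▸ h)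
  refine hμinf p.roots.toFinset (measure_mono_null (fun z hz => ?_) (ae_iff.mp hae))
  simpa [hp] using hz

theorem eq_zero_of_polyInner_X_pow_eq_zero (hμ : ∀ᵐ z ∂μ, z ∈ Metric.sphere (0 : ℂ) 1)
    (hμinf : ∀ s : Finset ℂ, μ ((s : Set ℂ)ᶜ) ≠ 0) {m : ℕ} {p : ℂ[X]} (hp : p.degree ≤ m)
    (h : ∀ k ≤ m, polyInner μ p (X ^ k) = 0) : p = 0 := by
  classical
  refine eq_zero_of_polyInner_self_eq_zero hμ hμinf ?_
  have hperp : Set.EqOn (polyInnerₗ hμ p) (0 : ℂ[X] →ₗ[ℂ] ℂ)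
      ↑((Finset.range (m + 1)).image (X ^ · : ℕ → ℂ[X])) := by
    intro q hq
    obtain ⟨k, hk, rfl⟩ := Finset.mem_image.mp hq
    rw [polyInnerₗ_apply, ← conj_polyInner, h k (Nat.lt_succ_iff.mp (Finset.mem_range.mp hk)),
      map_zero, LinearMap.zero_apply]
  simpa using LinearMap.eqOn_span' hperp ((degreeLE_eq_span_X_pow (R := ℂ)) ▸ mem_degreeLE.mpr hp)

theorem not_linearIndependent_of_polyInner_X_pow_eq_zero
    (hμ : ∀ᵐ z ∂μ, z ∈ Metric.sphere (0 : ℂ) 1) (hμinf : ∀ s : Finset ℂ, μ ((s : Set ℂ)ᶜ) ≠ 0)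
    {ι : Type*} [Fintype ι] (hι : 2 < Fintype.card ι) {m : ℕ} {F : ι → ℂ[X]}
    (hdeg : ∀ i, (F i).degree ≤ ↑(m + 1))
    (horth : ∀ i k, 1 ≤ k → k ≤ m → polyInner μ (F i) (X ^ k) = 0) :
    ¬ LinearIndependent ℂ F := by
  intro hF
  let W : Submodule ℂ ℂ[X] := degreeLE ℂ ↑(m + 1) ⊓
    ⨅ (k : ℕ) (_ : 1 ≤ k ∧ k ≤ m), LinearMap.ker (polyInnerₗ hμ (X ^ k))
  have hFW : Submodule.span ℂ (Set.range F) ≤ W := by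
    refine Submodule.span_le.mpr ?_
    rintro _ ⟨i, rfl⟩
    simp only [W, SetLike.mem_coe, Submodule.mem_inf, mem_degreeLE, Submodule.mem_iInf,
      LinearMap.mem_ker, polyInnerₗ_apply]
    exact ⟨hdeg i, fun k hk => horth i k hk.1 hk.2⟩
  let T : ℂ[X] →ₗ[ℂ] Fin 2 → ℂ := LinearMap.pi ![polyInnerₗ hμ 1, polyInnerₗ hμ (X ^ (m + 1))]
  have hdisj : Disjoint (Submodule.span ℂ (Set.range F)) (LinearMap.ker T) := by
    refine Submodule.disjoint_def.mpr fun p hp hTp => ?_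
    obtain ⟨hpdeg, hpmid⟩ := Submodule.mem_inf.mp (hFW hp)
    simp only [Submodule.mem_iInf, LinearMap.mem_ker, polyInnerₗ_apply] at hpmid
    have h0 : polyInner μ p 1 = 0 := congrFun hTp 0
    have hm : polyInner μ p (X ^ (m + 1)) = 0 := congrFun hTp 1
    refine eq_zero_of_polyInner_X_pow_eq_zero hμ hμinf (mem_degreeLE.mp hpdeg) fun k hk => ?_
    rcases Nat.eq_zero_or_pos k with rfl | hk₀
    · simpa using h0
    rcases hk.eq_or_lt with rfl | hkm
    · exact hm
    · exact hpmid k ⟨hk₀, by omega⟩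
  have hcard := (hF.map hdisj).fintype_card_le_finrank
  rw [Module.finrank_fin_fun] at hcard
  omega

end PolyInner

noncomputable def christoffelPoly (φ : ℕ → ℂ[X]) (n : ℕ) (x : ℂ) : ℂ[X] :=
  ∑ j ∈ Finset.range (n + 1), conj ((φ j).eval x) • φ j

section Christoffel

variable {φ : ℕ → ℂ[X]} {n : ℕ}

@[simp]
theorem eval_christoffelPoly (x z : ℂ) :
    (christoffelPoly φ n x).eval z = christoffelK φ n x z := by
  simp [christoffelPoly, christoffelK, eval_finsetSum]

theorem conj_christoffelK (x y : ℂ) :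
    conj (christoffelK φ n x y) = christoffelK φ n y x := by
  simp [christoffelK, mul_comm]

theorem degree_christoffelPoly_le (hdeg : ∀ k, (φ k).degree ≤ k) (x : ℂ) :
    (christoffelPoly φ n x).degree ≤ n :=
  mem_degreeLE.mp <| Submodule.sum_mem _ fun j hj => Submodule.smul_mem _ _ <|
    mem_degreeLE.mpr <| (hdeg j).trans <| by
      exact_mod_cast Nat.lt_succ_iff.mp (Finset.mem_range.mp hj)

theorem degree_X_sub_C_mul_christoffelPoly_le (hdeg : ∀ k, (φ k).degree ≤ k) (x : ℂ) :
    ((X - C x) * christoffelPoly φ n x).degree ≤ ↑(n + 1) := by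
  grw [degree_mul_le, degree_X_sub_C, degree_christoffelPoly_le hdeg]
  norm_cast
  omega

theorem sub_mul_christoffelK_eq_zero_of_paraOrtho_eq_zero {w z : ℂ}
    (hw : w ∈ Metric.sphere (0 : ℂ) 1) (h : paraOrtho φ n w z = 0) :
    (w - z) * christoffelK φ n z w = 0 := by
  rcases mul_eq_zero.mp h with h | h
  · have hw1 : w * conj w = 1 := by
      rw [Complex.mul_conj', mem_sphere_zero_iff_norm.mp hw]; norm_num
    have hzw : w - z = 0 := by linear_combination w * h + z * hw1
    rw [hzw, zero_mul]
  · rw [← conj_christoffelK, h, map_zero, mul_zero]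

variable {μ : Measure ℂ} [IsFiniteMeasureOnCompacts μ]

theorem polyInner_christoffelPoly (hμ : ∀ᵐ z ∂μ, z ∈ Metric.sphere (0 : ℂ) 1)
    (hdeg : ∀ k, (φ k).degree = k)
    (horth : ∀ k m, polyInner μ (φ k) (φ m) = if k = m then 1 else 0)
    {q : ℂ[X]} (hq : q.degree ≤ n) (x : ℂ) :
    polyInner μ q (christoffelPoly φ n x) = q.eval x := by
  let S : Polynomial.Sequence ℂ := ⟨φ, hdeg⟩
  have hspan : Submodule.span ℂ (φ '' Set.Iic n) = degreeLE ℂ n :=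
    S.span_degreeLE fun i _ => isUnit_iff_ne_zero.mpr (leadingCoeff_ne_zero.mpr (S.ne_zero i))
  refine LinearMap.eqOn_span' (f := polyInnerₗ hμ _) (g := leval x) ?_
    (hspan ▸ mem_degreeLE.mpr hq)
  rintro _ ⟨j, hj, rfl⟩
  rw [polyInnerₗ_apply, ← conj_polyInner, christoffelPoly, ← polyInnerₗ_apply hμ, map_sum]
  simp [horth, Nat.lt_succ_iff.mpr (Set.mem_Iic.mp hj)]

theorem christoffelPoly_ne_zero (hμ : ∀ᵐ z ∂μ, z ∈ Metric.sphere (0 : ℂ) 1)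
    (hdeg : ∀ k, (φ k).degree = k)
    (horth : ∀ k m, polyInner μ (φ k) (φ m) = if k = m then 1 else 0) (x : ℂ) :
    christoffelPoly φ n x ≠ 0 := by
  intro h
  have h1 := polyInner_christoffelPoly hμ hdeg horth
    (degree_one_le.trans (WithBot.coe_le_coe.mpr n.zero_le)) x
  simp [h, polyInner] at h1

theorem exists_mem_sphere_ne_and_christoffelK_ne_zero
    (hμ : ∀ᵐ z ∂μ, z ∈ Metric.sphere (0 : ℂ) 1) (hμinf : ∀ s : Finset ℂ, μ ((s : Set ℂ)ᶜ) ≠ 0)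
    (hdeg : ∀ k, (φ k).degree = k)
    (horth : ∀ k m, polyInner μ (φ k) (φ m) = if k = m then 1 else 0) (w : ℂ) :
    ∃ x ∈ Metric.sphere (0 : ℂ) 1, x ≠ w ∧ christoffelK φ n x w ≠ 0 := by
  obtain ⟨x, hx, hxs⟩ :=
    exists_mem_notMem_finset_of_ae_mem hμ hμinf ((christoffelPoly φ n w).roots.toFinset ∪ {w})
  simp only [Finset.mem_union, Multiset.mem_toFinset,
    mem_roots (christoffelPoly_ne_zero hμ hdeg horth w), IsRoot.def, eval_christoffelPoly,
    Finset.mem_singleton, not_or] at hxs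
  exact ⟨x, hx, hxs.2, by rw [← conj_christoffelK, _root_.map_ne_zero]; exact hxs.1⟩

theorem polyInner_X_sub_C_mul_christoffelPoly_X_pow
    (hμ : ∀ᵐ z ∂μ, z ∈ Metric.sphere (0 : ℂ) 1) (hdeg : ∀ k, (φ k).degree = k)
    (horth : ∀ k m, polyInner μ (φ k) (φ m) = if k = m then 1 else 0)
    {x : ℂ} (hx : x ∈ Metric.sphere (0 : ℂ) 1) {k : ℕ} (hk₁ : 1 ≤ k) (hkn : k ≤ n) :
    polyInner μ ((X - C x) * christoffelPoly φ n x) (X ^ k) = 0 := by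
  obtain ⟨j, rfl⟩ := Nat.exists_eq_add_of_le' hk₁
  have hrepr : ∀ i ≤ n, polyInner μ (christoffelPoly φ n x) (X ^ i) = conj x ^ i := fun i hi => by
    rw [← conj_polyInner, polyInner_christoffelPoly hμ hdeg horth
      ((degree_X_pow_le i).trans (by exact_mod_cast hi)), eval_X_pow, map_pow]
  have hx1 : x * conj x = 1 := by
    rw [Complex.mul_conj', mem_sphere_zero_iff_norm.mp hx]; norm_num
  rw [sub_mul, C_mul', ← polyInnerₗ_apply hμ, map_sub, map_smul, polyInnerₗ_apply,
    polyInnerₗ_apply, pow_succ' X, polyInner_X_mul_X_mul hμ, hrepr j (by omega),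
    ← pow_succ', hrepr (j + 1) hkn, smul_eq_mul]
  linear_combination (-conj x ^ j) * hx1

theorem not_linearIndependent_X_sub_C_mul_christoffelPoly
    (hμ : ∀ᵐ z ∂μ, z ∈ Metric.sphere (0 : ℂ) 1) (hμinf : ∀ s : Finset ℂ, μ ((s : Set ℂ)ᶜ) ≠ 0)
    (hdeg : ∀ k, (φ k).degree = k)
    (horth : ∀ k m, polyInner μ (φ k) (φ m) = if k = m then 1 else 0)
    {ι : Type*} [Fintype ι] (hι : 2 < Fintype.card ι) {x : ι → ℂ}
    (hx : ∀ i, x i ∈ Metric.sphere (0 : ℂ) 1) :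
    ¬ LinearIndependent ℂ fun i => (X - C (x i)) * christoffelPoly φ n (x i) :=
  not_linearIndependent_of_polyInner_X_pow_eq_zero hμ hμinf hι
    (fun i => degree_X_sub_C_mul_christoffelPoly_le (fun k => (hdeg k).le) (x i))
    (fun i _ hk₁ hkn => polyInner_X_sub_C_mul_christoffelPoly_X_pow hμ hdeg horth (hx i) hk₁ hkn)

end Christoffel

theorem christoffelK_eq_zero_of_distinct_paraOrtho_zeros_general
    (μ : Measure ℂ) [IsFiniteMeasure μ]
    (hμT : μ (Metric.sphere (0 : ℂ) 1)ᶜ = 0)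
    (hμinf : ∀ s : Finset ℂ, μ ((s : Set ℂ)ᶜ) ≠ 0)
    (φ : ℕ → Polynomial ℂ)
    (hdeg : ∀ k, (φ k).degree = (k : ℕ))
    (horth : ∀ k m, ∫ z, (φ k).eval z * conj ((φ m).eval z) ∂μ
        = if k = m then 1 else 0)
    (n : ℕ) (w : ℂ) (hw : w ∈ Metric.sphere (0 : ℂ) 1)
    (ζ ξ : ℂ) (hζ : ζ ∈ Metric.sphere (0 : ℂ) 1) (hξ : ξ ∈ Metric.sphere (0 : ℂ) 1)
    (hne : ζ ≠ ξ)
    (hζ0 : paraOrtho φ n w ζ = 0) (hξ0 : paraOrtho φ n w ξ = 0) :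
    christoffelK φ n ζ ξ = 0 := by
  have hμ : ∀ᵐ z ∂μ, z ∈ Metric.sphere (0 : ℂ) 1 := hμT
  obtain ⟨x, hx, hxw, hKx⟩ :=
    exists_mem_sphere_ne_and_christoffelK_ne_zero (n := n) hμ hμinf hdeg horth w
  have hdep := not_linearIndependent_X_sub_C_mul_christoffelPoly hμ hμinf hdeg horth
    (n := n) (by simp) (x := ![ζ, ξ, x]) fun i => by fin_cases i <;> assumption
  obtain ⟨c, hc⟩ := exists_eq_smul_of_not_linearIndependent (leval w) hdep
    (by simpa using sub_mul_christoffelK_eq_zero_of_paraOrtho_eq_zero hw hζ0)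
    (by simpa using sub_mul_christoffelK_eq_zero_of_paraOrtho_eq_zero hw hξ0)
    (by simpa using mul_ne_zero (sub_ne_zero.mpr hxw.symm) hKx)
    (by simpa using mul_ne_zero (X_sub_C_ne_zero ξ) (christoffelPoly_ne_zero hμ hdeg horth ξ))
  have hcξ := congrArg (eval ξ) hc
  simp only [Matrix.cons_val_zero, Matrix.cons_val_one, eval_smul, eval_mul, eval_sub, eval_X,
    eval_C, sub_self, zero_mul, smul_zero, eval_christoffelPoly] at hcξ
  exact (mul_eq_zero.mp hcξ).resolve_left (sub_ne_zero.mpr hne.symm)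

/-- If `ζ` and `ξ` are two distinct points of the unit circle that are both zeros of the
para-orthogonal polynomial `B_{n+1}(w,·)`, then `K_n(ζ, ξ) = 0`. -/
theorem christoffelK_eq_zero_of_distinct_paraOrtho_zeros
    (μ : Measure ℂ) [IsFiniteMeasure μ]
    (hμT : μ (Metric.sphere (0 : ℂ) 1)ᶜ = 0)
    (hμinf : ∀ s : Finset ℂ, μ ((s : Set ℂ)ᶜ) ≠ 0)
    (φ : ℕ → Polynomial ℂ)
    (hdeg : ∀ k, (φ k).degree = (k : ℕ))
    (hlead : ∀ k, 0 < ((φ k).leadingCoeff).re ∧ ((φ k).leadingCoeff).im = 0)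
    (horth : ∀ k m, ∫ z, (φ k).eval z * conj ((φ m).eval z) ∂μ
        = if k = m then 1 else 0)
    (n : ℕ) (w : ℂ) (hw : w ∈ Metric.sphere (0 : ℂ) 1)
    (ζ ξ : ℂ) (hζ : ζ ∈ Metric.sphere (0 : ℂ) 1) (hξ : ξ ∈ Metric.sphere (0 : ℂ) 1)
    (hne : ζ ≠ ξ)
    (hζ0 : paraOrtho φ n w ζ = 0) (hξ0 : paraOrtho φ n w ξ = 0) :
    christoffelK φ n ζ ξ = 0 :=
  christoffelK_eq_zero_of_distinct_paraOrtho_zeros_general μ hμT hμinf φ hdeg horth n w hw ζ ξ hζ hξ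
    hne hζ0 hξ0
end

section
/- Let μ be a finite positive Borel measure on the unit circle T with infinite support, K_n its Christoffel kernel, w ∈ T, and ζ_{0n}, …, ζ_{nn} ∈ T the zeros of the para-orthogonal polynomial B_{n+1}(w,·). Then the total mass of the discrete measure μ_n := Σ_{j=0}^n (1/K_n(ζ_{jn}, ζ_{jn})) δ_{ζ_{jn}} equals the total mass of μ; equivalently, Σ_{j=0}^n 1/K_n(ζ_{jn}, ζ_{jn}) = μ(T). -/
open MeasureTheory Polynomial Filter
open scoped ComplexConjugate Topology

/-- The discrete measure `μ_n = ∑_{j=0}^n (1/K_n(ζ_j,ζ_j)) δ_{ζ_j}`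
(recall `K_n(ζ,ζ) = ∑_k |φ_k(ζ)|²` is a positive real number for `ζ ∈ T`). -/
noncomputable def nodeMeasure (φ : ℕ → Polynomial ℂ) (n : ℕ) (ζ : Fin (n + 1) → ℂ) :
    Measure ℂ :=
  ∑ j : Fin (n + 1),
    ENNReal.ofReal (((christoffelK φ n (ζ j) (ζ j)).re)⁻¹) • Measure.dirac (ζ j)

/-!
Multiplication by `z` is an isometry of `L²(μ)` when `μ` lives on the circle, so the coordinate
vectors of `z φ_m` (`m ≤ n`) in the orthonormal system `φ_0, …, φ_{n+1}` are orthonormal in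
`ℂ^{n+2}`. Completing them by one unit vector `ψ` and applying Parseval to the evaluation vectors
`(φ_p(t))_p` gives a Christoffel–Darboux identity
`(1 - t̄ s) K_n(t,s) = conj (g t) * g s - conj (φ_{n+1}(t)) * φ_{n+1}(s)`
with `g t = ⟪ψ, (φ_p(t))_p⟫`.
At two distinct zeros of `B_{n+1}(w, ·)` it forces `K_n(ζ_j, ζ_k) = 0`, so the `n + 1` vectors
`(φ_m(ζ_j))_m` form an orthogonal basis of `ℂ^{n+1}`. Parseval for the first unit vector gives
`∑_j |φ_0|² / K_n(ζ_j, ζ_j) = 1`, while `∫ |φ_0|² dμ = 1` gives `|φ_0|² μ(T) = 1`.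
-/

open scoped InnerProductSpace

section InnerProduct
variable {𝕜 E : Type*} [RCLike 𝕜] [NormedAddCommGroup E] [InnerProductSpace 𝕜 E]
  [FiniteDimensional 𝕜 E]

theorem Orthonormal.exists_inner_eq_sum_inner_mul_inner_add {N : ℕ} {v : Fin N → E}
    (hv : Orthonormal 𝕜 v) (hdim : Module.finrank 𝕜 E = N + 1) :
    ∃ ψ : E, ∀ x y : E,
      ⟪x, y⟫_𝕜 = ∑ i, ⟪x, v i⟫_𝕜 * ⟪v i, y⟫_𝕜 + ⟪x, ψ⟫_𝕜 * ⟪ψ, y⟫_𝕜 := by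
  set v' : Fin (N + 1) → E := Fin.snoc v 0
  have hv' : Orthonormal 𝕜 ((Set.range Fin.castSucc).domRestrict v') := by
    rw [orthonormal_iff_ite] at hv ⊢
    rintro ⟨_, i, rfl⟩ ⟨_, j, rfl⟩
    simpa [v', Subtype.ext_iff] using hv i j
  obtain ⟨b, hb⟩ := hv'.exists_orthonormalBasis_extension_of_card_eq (by simpa using hdim)
  refine ⟨b (Fin.last N), fun x y => ?_⟩
  rw [← b.sum_inner_mul_inner, Fin.sum_univ_castSucc]
  simp [hb _ (Set.mem_range_self _), v']

theorem sum_norm_inner_sq_div_norm_sq_eq_norm_sq {ι : Type*} [Fintype ι] {v : ι → E}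
    (hv : Pairwise fun i j => ⟪v i, v j⟫_𝕜 = 0) (hv0 : ∀ i, v i ≠ 0)
    (hcard : Module.finrank 𝕜 E = Fintype.card ι) (x : E) :
    ∑ i, ‖⟪v i, x⟫_𝕜‖ ^ 2 / ‖v i‖ ^ 2 = ‖x‖ ^ 2 := by
  set u : ι → E := fun i => (‖v i‖ : 𝕜)⁻¹ • v i
  have hu : Orthonormal 𝕜 (Set.univ.domRestrict u) := by
    refine ⟨fun i => norm_smul_inv_norm (hv0 i), fun i j hij => ?_⟩
    simp [u, inner_smul_left, inner_smul_right, hv (Subtype.coe_ne_coe.2 hij)]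
  obtain ⟨b, hb⟩ := hu.exists_orthonormalBasis_extension_of_card_eq hcard
  rw [← b.sum_sq_norm_inner_right x]
  refine Finset.sum_congr rfl fun i _ => ?_
  rw [hb i (Set.mem_univ i)]
  simp [u, inner_smul_left, norm_mul, mul_pow, div_eq_inv_mul]

end InnerProduct

theorem exists_eq_sum_smul_of_degree_lt {K : Type*} [Field K] {φ : ℕ → K[X]}
    (hdeg : ∀ k, (φ k).degree = k) {m : ℕ} {p : K[X]} (hp : p.degree < m) :
    ∃ c : Fin m → K, ∑ i, c i • φ i = p := by
  have hspan := Sequence.span_degreeLT ⟨φ, hdeg⟩ (m := m) fun i _ =>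
    (leadingCoeff_ne_zero.2 (Sequence.ne_zero ⟨φ, hdeg⟩ i)).isUnit
  rw [← Submodule.mem_span_range_iff_exists_fun]
  have : Set.range (fun i : Fin m => φ i) = φ '' Set.Iio m := by
    ext; simp [Fin.exists_iff]
  rw [this]
  exact hspan ▸ mem_degreeLT.2 hp

theorem eval_eq_coeff_zero_of_degree_eq_zero {R : Type*} [Semiring R] {p : R[X]}
    (hp : p.degree = 0) (t : R) : p.eval t = p.coeff 0 := by
  conv_lhs => rw [eq_C_of_degree_eq_zero hp]
  exact eval_C

theorem eval_ne_zero_of_degree_eq_zero {R : Type*} [Semiring R] {p : R[X]}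
    (hp : p.degree = 0) (t : R) : p.eval t ≠ 0 := by
  rw [eval_eq_coeff_zero_of_degree_eq_zero hp]
  exact coeff_ne_zero_of_eq_degree hp

noncomputable def evalVec (φ : ℕ → ℂ[X]) (N : ℕ) (t : ℂ) : EuclideanSpace ℂ (Fin N) :=
  WithLp.toLp 2 fun p => (φ p).eval t

theorem christoffelK_eq_inner (φ : ℕ → ℂ[X]) (n : ℕ) (t s : ℂ) :
    christoffelK φ n t s = ⟪evalVec φ (n + 1) t, evalVec φ (n + 1) s⟫_ℂ := by
  simp [christoffelK, evalVec, PiLp.inner_apply, Finset.sum_range, mul_comm]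

theorem christoffelK_succ (φ : ℕ → ℂ[X]) (n : ℕ) (t s : ℂ) :
    christoffelK φ (n + 1) t s
      = christoffelK φ n t s + conj ((φ (n + 1)).eval t) * (φ (n + 1)).eval s :=
  Finset.sum_range_succ _ _

theorem christoffelK_self (φ : ℕ → ℂ[X]) (n : ℕ) (t : ℂ) :
    christoffelK φ n t t = ((‖evalVec φ (n + 1) t‖ ^ 2 : ℝ) : ℂ) := by
  rw [christoffelK_eq_inner, inner_self_eq_norm_sq_to_K]
  norm_cast

theorem evalVec_ne_zero {φ : ℕ → ℂ[X]} (hdeg0 : (φ 0).degree = 0) (n : ℕ) (t : ℂ) :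
    evalVec φ (n + 1) t ≠ 0 := fun h =>
  eval_ne_zero_of_degree_eq_zero hdeg0 t (congrArg (· 0) h)

theorem christoffelK_self_re_pos {φ : ℕ → ℂ[X]} (hdeg0 : (φ 0).degree = 0) (n : ℕ) (t : ℂ) :
    0 < (christoffelK φ n t t).re := by
  rw [christoffelK_self, Complex.ofReal_re]
  exact pow_pos (norm_pos_iff.2 (evalVec_ne_zero hdeg0 n t)) 2

theorem christoffelK_self_eq_zero_of_forall_mul_eq_zero (φ : ℕ → ℂ[X]) (n : ℕ) {w : ℂ}
    (h : ∀ u, (1 - conj w * u) * christoffelK φ n w u = 0) : christoffelK φ n w w = 0 := by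
  set P : ℂ[X] := ∑ j ∈ Finset.range (n + 1), C (conj ((φ j).eval w)) * φ j
  have hP : ∀ u, P.eval u = christoffelK φ n w u := fun u => by
    simp [P, christoffelK, eval_finsetSum]
  have hfactor : (1 - C (conj w) * X : ℂ[X]) ≠ 0 := fun h0 => by
    simpa using congrArg (eval 0) h0
  have hprod : (1 - C (conj w) * X) * P = 0 := Polynomial.funext fun u => by
    simpa [hP] using h u
  rw [← hP, (mul_eq_zero.1 hprod).resolve_left hfactor, eval_zero]

theorem kernel_eq_zero_of_christoffelDarboux {K : ℂ → ℂ → ℂ} {g A : ℂ → ℂ}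
    (hCD : ∀ t s, (1 - conj t * s) * K t s = conj (g t) * g s - conj (A t) * A s)
    {w ζ ζ' : ℂ} (hw : ‖w‖ = 1) (hAw : A w ≠ 0) (hζ : ‖ζ‖ = 1) (hne : ζ ≠ ζ')
    (h0 : (1 - conj w * ζ) * K w ζ = 0) (h0' : (1 - conj w * ζ') * K w ζ' = 0) :
    K ζ ζ' = 0 := by
  have hgA : ∀ {u}, (1 - conj w * u) * K w u = 0 → conj (g w) * g u = conj (A w) * A u :=
    fun h => by linear_combination (hCD w _).symm.trans h
  have hww : conj (g w) * g w = conj (A w) * A w := by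
    have := hCD w w
    rw [Complex.conj_mul', hw, Complex.ofReal_one, one_pow, sub_self, zero_mul] at this
    linear_combination -this
  have hAw' : conj (A w) * A w ≠ 0 := by simpa [Complex.conj_mul'] using hAw
  have hg : conj (g ζ) * g ζ' = conj (A ζ) * A ζ' := by
    refine mul_right_cancel₀ hAw' ?_
    have hζg := congrArg conj (hgA h0)
    simp only [map_mul, Complex.conj_conj] at hζg
    linear_combination
      (conj (g w) * g ζ') * hζg + (conj (A ζ) * A w) * hgA h0' - (conj (g ζ) * g ζ') * hww
  have hfactor : 1 - conj ζ * ζ' ≠ 0 := by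
    intro h
    apply hne
    have hζ1 : conj ζ * ζ = 1 := by rw [Complex.conj_mul', hζ]; simp
    have hconj : conj ζ ≠ 0 := by simpa using ne_zero_of_norm_ne_zero (hζ ▸ one_ne_zero)
    exact mul_left_cancel₀ hconj (by linear_combination hζ1 + h)
  have := hCD ζ ζ'
  rw [hg, sub_self] at this
  exact (mul_eq_zero.1 this).resolve_left hfactor

theorem sum_norm_sq_div_christoffelK_self_eq_one {φ : ℕ → ℂ[X]} (hdeg0 : (φ 0).degree = 0)
    {n : ℕ} {ζ : Fin (n + 1) → ℂ} (hζ : Pairwise fun j k => christoffelK φ n (ζ j) (ζ k) = 0) :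
    ∑ j, ‖(φ 0).coeff 0‖ ^ 2 / (christoffelK φ n (ζ j) (ζ j)).re = 1 := by
  have hParseval := sum_norm_inner_sq_div_norm_sq_eq_norm_sq (𝕜 := ℂ)
    (v := fun j => evalVec φ (n + 1) (ζ j))
    (fun j k hjk => (christoffelK_eq_inner φ n _ _).symm.trans (hζ hjk))
    (fun j => evalVec_ne_zero hdeg0 n (ζ j)) (by simp) (EuclideanSpace.single 0 1)
  rw [PiLp.norm_single, norm_one, one_pow] at hParseval
  rw [← hParseval]
  refine Finset.sum_congr rfl fun j _ => ?_
  rw [christoffelK_self, Complex.ofReal_re, EuclideanSpace.inner_single_right]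
  simp [evalVec, eval_eq_coeff_zero_of_degree_eq_zero hdeg0]

section Measure

variable {μ : Measure ℂ} {φ : ℕ → ℂ[X]}

theorem integrable_eval_mul_conj_eval [IsFiniteMeasure μ]
    (hμT : μ (Metric.sphere (0 : ℂ) 1)ᶜ = 0) (p q : ℂ[X]) :
    Integrable (fun z => p.eval z * conj (q.eval z)) μ := by
  rw [← Measure.restrict_eq_self_of_ae_mem (mem_ae_iff.2 hμT)]
  exact ((p.continuous.mul (Complex.continuous_conj.comp q.continuous)).continuousOn
    ).integrableOn_compact (isCompact_sphere 0 1)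

theorem integral_X_mul_eval_mul_conj_eval (hμT : μ (Metric.sphere (0 : ℂ) 1)ᶜ = 0)
    (p q : ℂ[X]) :
    ∫ z, (X * p).eval z * conj ((X * q).eval z) ∂μ = ∫ z, p.eval z * conj (q.eval z) ∂μ := by
  refine integral_congr_ae ?_
  filter_upwards [mem_ae_iff.2 hμT] with z hz
  have hz1 : z * conj z = 1 := by
    rw [Complex.mul_conj', mem_sphere_zero_iff_norm.1 hz]; simp
  simp only [eval_mul, eval_X, map_mul]
  linear_combination (p.eval z * conj (q.eval z)) * hz1

theorem integral_sum_smul_mul_conj_sum_smul [IsFiniteMeasure μ]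
    (hμT : μ (Metric.sphere (0 : ℂ) 1)ᶜ = 0)
    (horth : ∀ k m, ∫ z, (φ k).eval z * conj ((φ m).eval z) ∂μ = if k = m then 1 else 0)
    {N : ℕ} (c d : Fin N → ℂ) :
    ∫ z, (∑ i, c i • φ i).eval z * conj ((∑ i, d i • φ i).eval z) ∂μ
      = ∑ i, c i * conj (d i) := by
  have hexpand : ∀ z, (∑ i, c i • φ i).eval z * conj ((∑ i, d i • φ i).eval z)
      = ∑ i, ∑ j, c i * conj (d j) * ((φ i).eval z * conj ((φ j).eval z)) := by
    intro z
    simp only [eval_finsetSum, eval_smul, smul_eq_mul, map_sum, map_mul, Finset.sum_mul_sum]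
    exact Finset.sum_congr rfl fun i _ => Finset.sum_congr rfl fun j _ => by ring
  have hint := fun i j : Fin N =>
    (integrable_eval_mul_conj_eval hμT (φ i) (φ j)).const_mul (c i * conj (d j))
  simp_rw [hexpand]
  rw [integral_finsetSum _ fun i _ => integrable_finsetSum _ fun j _ => hint i j]
  simp_rw [integral_finsetSum _ fun j _ => hint _ j, integral_const_mul, horth, Fin.val_inj]
  simp

theorem exists_christoffelDarboux [IsFiniteMeasure μ]
    (hμT : μ (Metric.sphere (0 : ℂ) 1)ᶜ = 0)
    (hdeg : ∀ k, (φ k).degree = k)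
    (horth : ∀ k m, ∫ z, (φ k).eval z * conj ((φ m).eval z) ∂μ = if k = m then 1 else 0)
    (n : ℕ) :
    ∃ g : ℂ → ℂ, ∀ t s : ℂ, (1 - conj t * s) * christoffelK φ n t s
      = conj (g t) * g s - conj ((φ (n + 1)).eval t) * (φ (n + 1)).eval s := by
  have hexp : ∀ m : Fin (n + 1), ∃ a : Fin (n + 1 + 1) → ℂ, ∑ p, a p • φ p = X * φ m := by
    intro m
    refine exists_eq_sum_smul_of_degree_lt hdeg ?_
    rw [degree_mul, degree_X, hdeg, ← Nat.cast_one, ← Nat.cast_add, Nat.cast_lt]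
    omega
  choose a ha using hexp
  set r : Fin (n + 1) → EuclideanSpace ℂ (Fin (n + 1 + 1)) := fun m => WithLp.toLp 2 (conj ∘ a m)
  have hr : Orthonormal ℂ r := by
    rw [orthonormal_iff_ite]
    intro k m
    calc ⟪r k, r m⟫_ℂ = ∑ p, a k p * conj (a m p) := by
          simp [r, PiLp.inner_apply, mul_comm]
      _ = ∫ z, (X * φ k).eval z * conj ((X * φ m).eval z) ∂μ := by
          rw [← ha, ← ha, integral_sum_smul_mul_conj_sum_smul hμT horth]
      _ = if k = m then 1 else 0 := by
          rw [integral_X_mul_eval_mul_conj_eval hμT, horth]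
          simp only [Fin.val_inj]
  obtain ⟨ψ, hψ⟩ := hr.exists_inner_eq_sum_inner_mul_inner_add (by simp)
  have hWr : ∀ t m, ⟪evalVec φ (n + 1 + 1) t, r m⟫_ℂ = conj (t * (φ m).eval t) := by
    intro t m
    rw [show t * (φ m).eval t = (X * φ m).eval t by simp, ← ha]
    simp [evalVec, r, PiLp.inner_apply, eval_finsetSum]
  refine ⟨fun t => ⟪ψ, evalVec φ (n + 1 + 1) t⟫_ℂ, fun t s => ?_⟩
  have hParseval := (christoffelK_eq_inner φ (n + 1) t s).trans (hψ _ _)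
  simp only [christoffelK_succ, ← inner_conj_symm (r _), hWr, ← inner_conj_symm _ ψ] at hParseval
  simp only [christoffelK, Finset.sum_range] at hParseval ⊢
  have hshift : ∑ m : Fin (n + 1), conj (t * (φ m).eval t) * conj (conj (s * (φ m).eval s))
      = conj t * s * ∑ m : Fin (n + 1), conj ((φ m).eval t) * (φ m).eval s := by
    rw [Finset.mul_sum]
    exact Finset.sum_congr rfl fun m _ => by simp only [map_mul, Complex.conj_conj]; ring
  linear_combination hParseval + hshift

theorem christoffelK_eq_zero_of_paraOrtho_eq_zero [IsFiniteMeasure μ]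
    (hμT : μ (Metric.sphere (0 : ℂ) 1)ᶜ = 0)
    (hdeg : ∀ k, (φ k).degree = k)
    (horth : ∀ k m, ∫ z, (φ k).eval z * conj ((φ m).eval z) ∂μ = if k = m then 1 else 0)
    {n : ℕ} {w ζ ζ' : ℂ} (hw : ‖w‖ = 1) (hζ : ‖ζ‖ = 1) (hne : ζ ≠ ζ')
    (h0 : paraOrtho φ n w ζ = 0) (h0' : paraOrtho φ n w ζ' = 0) :
    christoffelK φ n ζ ζ' = 0 := by
  obtain ⟨g, hCD⟩ := exists_christoffelDarboux hμT hdeg horth n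
  refine kernel_eq_zero_of_christoffelDarboux hCD hw ?_ hζ hne h0 h0'
  -- If `φ_{n+1}(w) = 0` then `|g w| = |φ_{n+1}(w)| = 0`, so `B_{n+1}(w, ·)` vanishes identically.
  intro hAw
  refine (christoffelK_self_re_pos (hdeg 0) n w).ne' ?_
  suffices hgw : g w = 0 by
    rw [christoffelK_self_eq_zero_of_forall_mul_eq_zero φ n fun u => by rw [hCD, hgw, hAw]; simp,
      Complex.zero_re]
  have := hCD w w
  rw [Complex.conj_mul', hw, hAw, Complex.ofReal_one, one_pow, sub_self, zero_mul] at this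
  simpa [Complex.conj_mul'] using this.symm

theorem measure_univ_toReal_mul_norm_sq_eq_one (hdeg0 : (φ 0).degree = 0)
    (horth0 : ∫ z, (φ 0).eval z * conj ((φ 0).eval z) ∂μ = 1) :
    (μ Set.univ).toReal * ‖(φ 0).coeff 0‖ ^ 2 = 1 := by
  simp_rw [eval_eq_coeff_zero_of_degree_eq_zero hdeg0, Complex.mul_conj', integral_const,
    Complex.real_smul] at horth0
  exact_mod_cast horth0

theorem sum_inv_christoffelK_self_eq_measure_univ [IsFiniteMeasure μ]
    (hμT : μ (Metric.sphere (0 : ℂ) 1)ᶜ = 0) (hdeg : ∀ k, (φ k).degree = k)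
    (horth : ∀ k m, ∫ z, (φ k).eval z * conj ((φ m).eval z) ∂μ = if k = m then 1 else 0)
    {n : ℕ} {w : ℂ} (hw : ‖w‖ = 1) {ζ : Fin (n + 1) → ℂ} (hζT : ∀ j, ‖ζ j‖ = 1)
    (hζinj : Function.Injective ζ) (hζ0 : ∀ j, paraOrtho φ n w (ζ j) = 0) :
    ∑ j, ((christoffelK φ n (ζ j) (ζ j)).re)⁻¹ = (μ Set.univ).toReal := by
  have hsum := sum_norm_sq_div_christoffelK_self_eq_one (hdeg 0) fun j k hjk =>
    christoffelK_eq_zero_of_paraOrtho_eq_zero hμT hdeg horth hw (hζT j) (hζinj.ne hjk)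
      (hζ0 j) (hζ0 k)
  have hmass := measure_univ_toReal_mul_norm_sq_eq_one (hdeg 0) (by simpa using horth 0 0)
  have hc : ‖(φ 0).coeff 0‖ ^ 2 ≠ 0 := by
    simpa using coeff_ne_zero_of_eq_degree (hdeg 0)
  simp_rw [div_eq_mul_inv, ← Finset.mul_sum] at hsum
  exact mul_left_cancel₀ hc (hsum.trans (hmass.symm.trans (mul_comm _ _)))

end Measure

theorem nodeMeasure_apply_univ (φ : ℕ → ℂ[X]) (n : ℕ) (ζ : Fin (n + 1) → ℂ) :
    nodeMeasure φ n ζ Set.univ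
      = ∑ j, ENNReal.ofReal ((christoffelK φ n (ζ j) (ζ j)).re)⁻¹ := by
  simp [nodeMeasure]

theorem nodeMeasure_total_mass_general
    (μ : Measure ℂ) [IsFiniteMeasure μ]
    (hμT : μ (Metric.sphere (0 : ℂ) 1)ᶜ = 0)
    (φ : ℕ → Polynomial ℂ)
    (hdeg : ∀ k, (φ k).degree = (k : ℕ))
    (horth : ∀ k m, ∫ z, (φ k).eval z * conj ((φ m).eval z) ∂μ
        = if k = m then 1 else 0)
    (n : ℕ) (w : ℂ) (hw : w ∈ Metric.sphere (0 : ℂ) 1)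
    (ζ : Fin (n + 1) → ℂ)
    (hζT : ∀ j, ζ j ∈ Metric.sphere (0 : ℂ) 1)
    (hζinj : Function.Injective ζ)
    (hζ0 : ∀ j, paraOrtho φ n w (ζ j) = 0) :
    nodeMeasure φ n ζ Set.univ = μ Set.univ ∧
    ∑ j : Fin (n + 1), ((christoffelK φ n (ζ j) (ζ j)).re)⁻¹ = (μ Set.univ).toReal := by
  have hsum := sum_inv_christoffelK_self_eq_measure_univ hμT hdeg horth
    (mem_sphere_zero_iff_norm.1 hw) (fun j => mem_sphere_zero_iff_norm.1 (hζT j)) hζinj hζ0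
  refine ⟨?_, hsum⟩
  rw [nodeMeasure_apply_univ, ← ENNReal.ofReal_sum_of_nonneg fun j _ =>
    (inv_pos.2 (christoffelK_self_re_pos (hdeg 0) n (ζ j))).le, hsum,
    ENNReal.ofReal_toReal (measure_ne_top μ _)]

/-- The total mass of the discrete measure `μ_n = ∑_j (1/K_n(ζ_{jn},ζ_{jn})) δ_{ζ_{jn}}`
equals the total mass of `μ`; equivalently `∑_{j=0}^n 1/K_n(ζ_{jn},ζ_{jn}) = μ(T)`. -/
theorem nodeMeasure_total_mass
    (μ : Measure ℂ) [IsFiniteMeasure μ]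
    (hμT : μ (Metric.sphere (0 : ℂ) 1)ᶜ = 0)
    (hμinf : ∀ s : Finset ℂ, μ ((s : Set ℂ)ᶜ) ≠ 0)
    (φ : ℕ → Polynomial ℂ)
    (hdeg : ∀ k, (φ k).degree = (k : ℕ))
    (hlead : ∀ k, 0 < ((φ k).leadingCoeff).re ∧ ((φ k).leadingCoeff).im = 0)
    (horth : ∀ k m, ∫ z, (φ k).eval z * conj ((φ m).eval z) ∂μ
        = if k = m then 1 else 0)
    (n : ℕ) (w : ℂ) (hw : w ∈ Metric.sphere (0 : ℂ) 1)
    (ζ : Fin (n + 1) → ℂ)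
    (hζT : ∀ j, ζ j ∈ Metric.sphere (0 : ℂ) 1)
    (hζinj : Function.Injective ζ)
    (hζ0 : ∀ j, paraOrtho φ n w (ζ j) = 0) :
    nodeMeasure φ n ζ Set.univ = μ Set.univ ∧
    ∑ j : Fin (n + 1), ((christoffelK φ n (ζ j) (ζ j)).re)⁻¹ = (μ Set.univ).toReal :=
  nodeMeasure_total_mass_general μ hμT φ hdeg horth n w hw ζ hζT hζinj hζ0
end
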